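/- arXiv:1607.07349 — 4 statements merged into one kernel-verified Lean document; each statement's English description precedes it below -/
import Mathlib

section
/- Let a, b, c, d, e ∈ ℂ satisfy 0 < Re b < Re e, e ∉ {0,−1,−2,…} and a ∉ {1,2,3,…}. Then for all real x, y with |x| < 1 and |y|·(1+|x|) < 1: H₂(a,b,c,d,e;x,y) = Σ_{j=0}^∞ [(c)_j (d)_j / ((1−a)_j · j!)] · (−y)^j · ₂F₁(a−j, b; e; x), and the series on the right converges absolutely. -/
open MeasureTheory Complex Set

noncomputable section

/-- Pochhammer symbol `(a)_k = a (a+1) ⋯ (a+k-1)`. -/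
def poch (a : ℂ) (k : ℕ) : ℂ := ∏ i ∈ Finset.range k, (a + i)

/-- Horn's `H₂` function defined by its double power series. -/
def H2 (a b c d e : ℂ) (x y : ℝ) : ℂ :=
  ∑' p : ℕ × ℕ,
    (-1 : ℂ) ^ p.2 * poch (a - p.2) p.1 * poch b p.1 * poch c p.2 * poch d p.2 /
      (poch (1 - a) p.2 * poch e p.1 * (Nat.factorial p.1 : ℂ) * (Nat.factorial p.2 : ℂ)) *
    (x : ℂ) ^ p.1 * (y : ℂ) ^ p.2

/-- Gauss hypergeometric series `₂F₁(a,b;c;z)`. -/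
def gauss (a b c : ℂ) (z : ℂ) : ℂ :=
  ∑' k : ℕ, poch a k * poch b k / (poch c k * (Nat.factorial k : ℂ)) * z ^ k

/-- comparison/ratio lemma -/
lemma ratio_bound (f g : ℕ → ℝ) (N : ℕ) (hf : ∀ n, 0 ≤ f n) (hg : ∀ n, 0 < g n)
    (h : ∀ n, N ≤ n → f (n+1) * g n ≤ f n * g (n+1)) :
    ∃ C : ℝ, 0 ≤ C ∧ ∀ n, f n ≤ C * g n := by
  set C : ℝ := ∑ k ∈ Finset.range (N+1), f k / g k with hC
  have hC0 : 0 ≤ C := Finset.sum_nonneg fun k _ => div_nonneg (hf k) (hg k).le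
  refine ⟨C, hC0, ?_⟩
  have hsmall : ∀ n, n ≤ N → f n ≤ C * g n := by
    intro n hn
    have h1 : f n / g n ≤ C := by
      apply Finset.single_le_sum (f := fun k => f k / g k)
        (fun k _ => div_nonneg (hf k) (hg k).le)
      simpa using Nat.lt_succ_of_le hn
    calc f n = (f n / g n) * g n := by rw [div_mul_cancel₀]; exact (hg n).ne'
    _ ≤ C * g n := mul_le_mul_of_nonneg_right h1 (hg n).le
  have hind : ∀ n, N ≤ n → f n ≤ C * g n := by
    intro n hn
    induction n, hn using Nat.le_induction with
    | base => exact hsmall N le_rfl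
    | succ n hn ih =>
      have h2 := h n hn
      have h3 : f n * g (n+1) ≤ C * g n * g (n+1) :=
        mul_le_mul_of_nonneg_right ih (hg (n+1)).le
      have h5 := h2.trans h3
      have h4 : f (n+1) * g n ≤ C * g (n+1) * g n := by linarith [h5]
      exact le_of_mul_le_mul_right h4 (hg n)
  intro n
  rcases le_total n N with h' | h'
  · exact hsmall n h'
  · exact hind n h'

lemma poch_norm_prod (z : ℂ) (k : ℕ) : ‖poch z k‖ = ∏ i ∈ Finset.range k, ‖z + i‖ := by
  simp [poch, norm_prod]

lemma key_reflect (z : ℂ) (n : ℕ) :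
    ∏ k ∈ Finset.range n, ‖z - (n : ℂ) + k‖ = ∏ k ∈ Finset.range n, ‖1 - z + k‖ := by
  rw [← Finset.prod_range_reflect (fun k => ‖z - (n:ℂ) + k‖) n]
  apply Finset.prod_congr rfl
  intro k hk
  have hk' : k < n := Finset.mem_range.mp hk
  have hcast : ((n - 1 - k : ℕ) : ℂ) = (n : ℂ) - 1 - k := by
    have h1 : (n - 1 - k : ℕ) = n - (1 + k) := by omega
    rw [h1, Nat.cast_sub (by omega)]
    push_cast; ring
  rw [hcast, ← norm_neg]
  congr 1; ring

lemma L5a (a : ℂ) (j n : ℕ) :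
    ‖poch (a - j) (j + n)‖ = ‖poch (1 - a) j‖ * ‖poch a n‖ := by
  rw [poch_norm_prod, Finset.prod_range_add]
  congr 1
  · rw [key_reflect a j, poch_norm_prod]
  · rw [poch_norm_prod]
    apply Finset.prod_congr rfl; intro k _
    congr 1; push_cast; ring

lemma L5b (a : ℂ) (m i : ℕ) :
    ‖poch (1 - a) (m + i)‖ = ‖poch (1 - a) m‖ * ‖poch (a - ((m + i : ℕ) : ℂ)) i‖ := by
  rw [poch_norm_prod, Finset.prod_range_add, ← poch_norm_prod]
  congr 1
  have h2 : ∏ k ∈ Finset.range i, ‖1 - a + ((m + k : ℕ) : ℂ)‖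
      = ∏ k ∈ Finset.range i, ‖1 - (a - m) + k‖ := by
    apply Finset.prod_congr rfl; intro k _; congr 1; push_cast; ring
  rw [h2, ← key_reflect (a - m) i, poch_norm_prod]
  apply Finset.prod_congr rfl; intro k _
  congr 1; push_cast; ring

set_option maxHeartbeats 2000000 in
theorem H2_Gauss_series_expansion
    (a b c d e : ℂ)
    (hb : 0 < b.re) (hbe : b.re < e.re)
    (he : ∀ n : ℕ, e ≠ -(n : ℂ)) (ha : ∀ n : ℕ, a ≠ (n : ℂ) + 1)
    (x y : ℝ) (hx : |x| < 1) (hy : |y| * (1 + |x|) < 1) :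
    Summable (fun j : ℕ => ‖poch c j * poch d j / (poch (1 - a) j * (Nat.factorial j : ℂ)) *
        ((-y : ℝ) : ℂ) ^ j * gauss (a - j) b e (x : ℂ)‖) ∧
    H2 a b c d e x y =
      ∑' j : ℕ, poch c j * poch d j / (poch (1 - a) j * (Nat.factorial j : ℂ)) *
        ((-y : ℝ) : ℂ) ^ j * gauss (a - j) b e (x : ℂ) := by
  -- notation
  set X : ℝ := |x| with hXdef
  set Y : ℝ := |y| with hYdef
  have hX0 : 0 ≤ X := abs_nonneg x
  have hY0 : 0 ≤ Y := abs_nonneg y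
  have hY1 : Y < 1 := lt_of_le_of_lt (le_mul_of_one_le_right hY0 (by linarith)) hy
  -- slack parameter
  obtain ⟨t, ht1, htX, htY⟩ : ∃ t : ℝ, 1 < t ∧ t^2 * X < 1 ∧ t^2 * Y * (1 + X) < 1 := by
    set u : ℝ := max X (Y * (1 + X)) with hu
    have hu0 : 0 ≤ u := le_trans hX0 (le_max_left _ _)
    have hu1 : u < 1 := max_lt hx hy
    have h1u : (0:ℝ) < 1 + u := by linarith
    refine ⟨Real.sqrt (2 / (1 + u)), ?_, ?_, ?_⟩
    · have h2 : (1:ℝ) < 2 / (1 + u) := by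
        rw [lt_div_iff₀ h1u]; linarith
      nlinarith [Real.sq_sqrt (show (0:ℝ) ≤ 2/(1+u) by positivity),
        Real.sqrt_nonneg (2/(1+u))]
    · rw [Real.sq_sqrt (by positivity)]
      rw [div_mul_eq_mul_div, div_lt_one h1u]
      have : X ≤ u := le_max_left _ _
      linarith
    · rw [Real.sq_sqrt (by positivity)]
      rw [div_mul_eq_mul_div, div_mul_eq_mul_div, div_lt_one h1u]
      have : Y * (1 + X) ≤ u := le_max_right _ _
      nlinarith
  have ht0 : 0 < t := lt_trans one_pos ht1
  -- basic nonvanishing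
  have hne_e : ∀ k : ℕ, e + (k:ℂ) ≠ 0 := by
    intro k h
    exact he k (by linear_combination h)
  have hne_1a : ∀ k : ℕ, 1 - a + (k:ℂ) ≠ 0 := by
    intro k h
    exact ha k (by linear_combination -h)
  have hpoch_e_ne : ∀ i, poch e i ≠ 0 := fun i =>
    Finset.prod_ne_zero_iff.mpr (fun k _ => hne_e k)
  have hpoch_1a_ne : ∀ j, poch (1 - a) j ≠ 0 := fun j =>
    Finset.prod_ne_zero_iff.mpr (fun k _ => hne_1a k)
  -- real comparison sequences
  set r : ℝ := e.re with hrdef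
  have hr : 0 < r := lt_trans hb hbe
  set PB : ℕ → ℝ := fun i => ∏ k ∈ Finset.range i, (‖b‖ + k) with hPB
  set PA : ℕ → ℝ := fun n => ∏ k ∈ Finset.range n, (‖a‖ + k) with hPA
  set PC : ℕ → ℝ := fun j => ∏ k ∈ Finset.range j, (‖c‖ + k) with hPC
  set PD : ℕ → ℝ := fun j => ∏ k ∈ Finset.range j, (‖d‖ + k) with hPD
  set PR : ℕ → ℝ := fun i => ∏ k ∈ Finset.range i, (r + k) with hPR
  set N1 : ℕ → ℝ := fun m => ‖poch (1 - a) m‖ with hN1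
  have hPRpos : ∀ i, 0 < PR i := fun i => Finset.prod_pos (fun k _ => by positivity)
  have hN1pos : ∀ m, 0 < N1 m := fun m => norm_pos_iff.mpr (hpoch_1a_ne m)
  have hnepos : ∀ i, 0 < ‖poch e i‖ := fun i => norm_pos_iff.mpr (hpoch_e_ne i)
  -- norm bounds on poch
  have hnorm_poch_le : ∀ (z : ℂ) (k : ℕ),
      ‖poch z k‖ ≤ ∏ i ∈ Finset.range k, (‖z‖ + i) := by
    intro z k
    rw [poch_norm_prod]
    apply Finset.prod_le_prod (fun i _ => norm_nonneg _)
    intro i _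
    calc ‖z + (i:ℂ)‖ ≤ ‖z‖ + ‖(i:ℂ)‖ := norm_add_le _ _
    _ = ‖z‖ + i := by simp
  have hPRle : ∀ i, PR i ≤ ‖poch e i‖ := by
    intro i
    rw [poch_norm_prod]
    apply Finset.prod_le_prod (fun k _ => by positivity)
    intro k _
    calc r + (k:ℝ) = (e + (k:ℂ)).re := by simp [hrdef]
    _ ≤ ‖e + (k:ℂ)‖ := Complex.re_le_norm _
  -- ratio bounds
  have hPBnn : ∀ n, 0 ≤ PB n := fun n => Finset.prod_nonneg fun k _ => by positivity
  have hPAnn : ∀ n, 0 ≤ PA n := fun n => Finset.prod_nonneg fun k _ => by positivity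
  have hPCnn : ∀ n, 0 ≤ PC n := fun n => Finset.prod_nonneg fun k _ => by positivity
  have hPDnn : ∀ n, 0 ≤ PD n := fun n => Finset.prod_nonneg fun k _ => by positivity
  obtain ⟨K1, hK1, hR1⟩ : ∃ C, 0 ≤ C ∧ ∀ i, PB i ≤ C * (PR i * t^i) := by
    obtain ⟨N, hN⟩ := exists_nat_gt (‖b‖ / (t - 1))
    have hNb : ‖b‖ < N * (t - 1) := by
      rwa [div_lt_iff₀ (by linarith)] at hN
    apply ratio_bound PB (fun i => PR i * t^i) N hPBnn
      (fun i => mul_pos (hPRpos i) (pow_pos ht0 i))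
    intro n hn
    have h2 : (N : ℝ) ≤ n := Nat.cast_le.mpr hn
    have key : ‖b‖ + n ≤ (r + n) * t := by nlinarith [norm_nonneg b]
    have e1 : PB (n+1) = PB n * (‖b‖ + n) := Finset.prod_range_succ _ _
    have e2 : PR (n+1) = PR n * (r + n) := Finset.prod_range_succ _ _
    have hnn : 0 ≤ PB n * (PR n * t^n) := mul_nonneg (hPBnn n) (by positivity)
    calc PB (n+1) * (PR n * t^n) = (PB n * (PR n * t^n)) * (‖b‖ + n) := by rw [e1]; ring
    _ ≤ (PB n * (PR n * t^n)) * ((r + n) * t) := mul_le_mul_of_nonneg_left key hnn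
    _ = PB n * (PR (n+1) * t^(n+1)) := by rw [e2, pow_succ]; ring
  obtain ⟨K2, hK2, hR2⟩ : ∃ C, 0 ≤ C ∧ ∀ n, PA n ≤ C * ((n.factorial : ℝ) * t^n) := by
    obtain ⟨N, hN⟩ := exists_nat_gt (‖a‖ / (t - 1))
    have hNa : ‖a‖ < N * (t - 1) := by
      rwa [div_lt_iff₀ (by linarith)] at hN
    apply ratio_bound PA (fun n => (n.factorial : ℝ) * t^n) N hPAnn
      (fun n => mul_pos (by exact_mod_cast n.factorial_pos) (pow_pos ht0 n))
    intro n hn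
    have h2 : (N : ℝ) ≤ n := Nat.cast_le.mpr hn
    have key : ‖a‖ + n ≤ (n + 1) * t := by nlinarith [norm_nonneg a]
    have e1 : PA (n+1) = PA n * (‖a‖ + n) := Finset.prod_range_succ _ _
    have e2 : ((n+1).factorial : ℝ) = (n.factorial : ℝ) * (n + 1) := by
      rw [Nat.factorial_succ]; push_cast; ring
    have hnn : 0 ≤ PA n * ((n.factorial : ℝ) * t^n) := mul_nonneg (hPAnn n) (by positivity)
    calc PA (n+1) * ((n.factorial : ℝ) * t^n)
        = (PA n * ((n.factorial : ℝ) * t^n)) * (‖a‖ + n) := by rw [e1]; ring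
    _ ≤ (PA n * ((n.factorial : ℝ) * t^n)) * ((n + 1) * t) := mul_le_mul_of_nonneg_left key hnn
    _ = PA n * (((n+1).factorial : ℝ) * t^(n+1)) := by rw [e2, pow_succ]; ring
  obtain ⟨K3, hK3, hR3⟩ : ∃ C, 0 ≤ C ∧ ∀ j, PC j * PD j ≤ C * (((j.factorial : ℝ))^2 * t^j) := by
    obtain ⟨N0, hN0⟩ := exists_nat_gt ((‖c‖ + ‖d‖ + ‖c‖ * ‖d‖) / (t - 1))
    have hNcd : ‖c‖ + ‖d‖ + ‖c‖ * ‖d‖ < N0 * (t - 1) := by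
      rwa [div_lt_iff₀ (by linarith)] at hN0
    apply ratio_bound (fun j => PC j * PD j) (fun j => ((j.factorial : ℝ))^2 * t^j) (N0 + 1)
      (fun j => mul_nonneg (hPCnn j) (hPDnn j))
      (fun j => mul_pos (pow_pos (by exact_mod_cast j.factorial_pos) 2) (pow_pos ht0 j))
    intro n hn
    have h2 : ((N0 : ℝ) + 1) ≤ n := by exact_mod_cast hn
    have h3 : (1:ℝ) ≤ n := by
      have : (0:ℝ) ≤ N0 := Nat.cast_nonneg _
      linarith
    have key : (‖c‖ + n) * (‖d‖ + n) ≤ ((n:ℝ) + 1)^2 * t := by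
      have h4 : (N0:ℝ)*(t-1) ≤ ((n:ℝ)-1)*(t-1) :=
        mul_le_mul_of_nonneg_right (by linarith) (by linarith)
      have h5 : ‖c‖ + ‖d‖ + ‖c‖*‖d‖ ≤ ((n:ℝ)-1)*(t-1) := by linarith
      have h6 := mul_le_mul_of_nonneg_right h5 (show (0:ℝ) ≤ n by linarith)
      have h7 : 0 ≤ ‖c‖*‖d‖*((n:ℝ)-1) :=
        mul_nonneg (mul_nonneg (norm_nonneg c) (norm_nonneg d)) (by linarith)
      nlinarith [norm_nonneg c, norm_nonneg d, mul_nonneg (norm_nonneg c) (norm_nonneg d)]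
    have e1 : PC (n+1) = PC n * (‖c‖ + n) := Finset.prod_range_succ _ _
    have e1' : PD (n+1) = PD n * (‖d‖ + n) := Finset.prod_range_succ _ _
    have e2 : ((n+1).factorial : ℝ) = (n.factorial : ℝ) * (n + 1) := by
      rw [Nat.factorial_succ]; push_cast; ring
    have hnn : 0 ≤ PC n * PD n * (((n.factorial : ℝ))^2 * t^n) :=
      mul_nonneg (mul_nonneg (hPCnn n) (hPDnn n)) (by positivity)
    calc PC (n+1) * PD (n+1) * (((n.factorial : ℝ))^2 * t^n)
        = (PC n * PD n * (((n.factorial : ℝ))^2 * t^n)) * ((‖c‖ + n) * (‖d‖ + n)) := by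
          rw [e1, e1']; ring
    _ ≤ (PC n * PD n * (((n.factorial : ℝ))^2 * t^n)) * (((n:ℝ) + 1)^2 * t) :=
        mul_le_mul_of_nonneg_left key hnn
    _ = PC n * PD n * ((((n+1).factorial : ℝ))^2 * t^(n+1)) := by rw [e2, pow_succ]; ring
  obtain ⟨K4, hK4, hR4⟩ : ∃ C, 0 ≤ C ∧ ∀ m, (m.factorial : ℝ) ≤ C * (t^m * N1 m) := by
    obtain ⟨N, hN⟩ := exists_nat_gt ((1 + t * ‖1 - a‖) / (t - 1))
    have hNa : 1 + t * ‖1 - a‖ < N * (t - 1) := by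
      rwa [div_lt_iff₀ (by linarith)] at hN
    apply ratio_bound (fun m => (m.factorial : ℝ)) (fun m => t^m * N1 m) N
      (fun m => by positivity)
      (fun m => mul_pos (pow_pos ht0 m) (hN1pos m))
    intro m hm
    have h2 : (N : ℝ) ≤ m := Nat.cast_le.mpr hm
    have hlow : (m : ℝ) - ‖1 - a‖ ≤ ‖1 - a + m‖ := by
      have e : (1 - a + (m : ℂ)) - (1 - a) = m := by ring
      have h1 : ‖(m : ℂ)‖ ≤ ‖1 - a + m‖ + ‖1 - a‖ := by
        calc ‖(m : ℂ)‖ = ‖(1 - a + (m : ℂ)) - (1 - a)‖ := by rw [e]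
        _ ≤ _ := norm_sub_le _ _
      have h2' : ‖(m : ℂ)‖ = (m : ℝ) := by simp
      linarith
    have key : (m : ℝ) + 1 ≤ t * ‖1 - a + m‖ := by nlinarith [norm_nonneg (1 - a)]
    have e1 : ((m+1).factorial : ℝ) = (m.factorial : ℝ) * (m + 1) := by
      rw [Nat.factorial_succ]; push_cast; ring
    have e2 : N1 (m+1) = N1 m * ‖1 - a + m‖ := by
      rw [hN1]
      show ‖poch (1-a) (m+1)‖ = ‖poch (1-a) m‖ * ‖1 - a + m‖
      rw [poch, Finset.prod_range_succ, norm_mul, ← poch]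
    have hnn : 0 ≤ (m.factorial : ℝ) * (t^m * N1 m) := by positivity
    calc ((m+1).factorial : ℝ) * (t^m * N1 m)
        = ((m.factorial : ℝ) * (t^m * N1 m)) * ((m:ℝ) + 1) := by rw [e1]; ring
    _ ≤ ((m.factorial : ℝ) * (t^m * N1 m)) * (t * ‖1 - a + m‖) := by
        apply mul_le_mul_of_nonneg_left key hnn
    _ = (m.factorial : ℝ) * (t^(m+1) * N1 (m+1)) := by rw [e2, pow_succ]; ring
  -- the double-series term
  set f : ℕ × ℕ → ℂ := fun p =>
    (-1 : ℂ) ^ p.2 * poch (a - p.2) p.1 * poch b p.1 * poch c p.2 * poch d p.2 /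
      (poch (1 - a) p.2 * poch e p.1 * (Nat.factorial p.1 : ℂ) * (Nat.factorial p.2 : ℂ)) *
    (x : ℂ) ^ p.1 * (y : ℂ) ^ p.2 with hf
  have hnormf : ∀ i j : ℕ, ‖f (i, j)‖ =
      ‖poch (a - (j:ℂ)) i‖ * ‖poch b i‖ * ‖poch c j‖ * ‖poch d j‖ * X^i * Y^j /
        (N1 j * ‖poch e i‖ * (i.factorial : ℝ) * (j.factorial : ℝ)) := by
    intro i j
    simp only [hf, hN1, norm_mul, norm_div, norm_pow, norm_neg, norm_one, one_pow,
      Complex.norm_real, Real.norm_eq_abs, Complex.norm_natCast]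
    rw [← hXdef, ← hYdef]
    ring
  -- master bound, case j ≤ i
  have MB1 : ∀ j n : ℕ, ‖f (j + n, j)‖ ≤
      (K2 * K1 * K3) * ((t^2 * X)^n * (t^2 * X * Y)^j) := by
    intro j n
    rw [hnormf (j + n) j]
    have hL5 : ‖poch (a - (j:ℂ)) (j + n)‖ = N1 j * ‖poch a n‖ := L5a a j n
    rw [hL5]
    have e1 : N1 j * ‖poch a n‖ * ‖poch b (j+n)‖ * ‖poch c j‖ * ‖poch d j‖ * X^(j+n) * Y^j /
        (N1 j * ‖poch e (j+n)‖ * ((j+n).factorial : ℝ) * (j.factorial : ℝ))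
        = N1 j * (‖poch a n‖ * ‖poch b (j+n)‖ * (‖poch c j‖ * ‖poch d j‖) * X^(j+n) * Y^j) /
          (N1 j * (‖poch e (j+n)‖ * ((j+n).factorial : ℝ) * (j.factorial : ℝ))) := by
      ring
    rw [e1, mul_div_mul_left _ _ (hN1pos j).ne']
    have hv : 0 < ‖poch e (j+n)‖ * ((j+n).factorial : ℝ) * (j.factorial : ℝ) :=
      mul_pos (mul_pos (hnepos _) (by exact_mod_cast (j+n).factorial_pos))
        (by exact_mod_cast j.factorial_pos)
    rw [div_le_iff₀ hv]
    have hb1 : ‖poch a n‖ ≤ K2 * ((n.factorial : ℝ) * t^n) :=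
      (hnorm_poch_le a n).trans (hR2 n)
    have hb2 : ‖poch b (j+n)‖ ≤ K1 * (‖poch e (j+n)‖ * t^(j+n)) := by
      refine (hnorm_poch_le b (j+n)).trans ((hR1 (j+n)).trans ?_)
      exact mul_le_mul_of_nonneg_left
        (mul_le_mul_of_nonneg_right (hPRle _) (pow_pos ht0 _).le) hK1
    have hb3 : ‖poch c j‖ * ‖poch d j‖ ≤ K3 * (((j.factorial : ℝ))^2 * t^j) := by
      refine le_trans ?_ (hR3 j)
      exact mul_le_mul (hnorm_poch_le c j) (hnorm_poch_le d j) (norm_nonneg _) (hPCnn j)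
    have hfact : (n.factorial : ℝ) * (j.factorial : ℝ) ≤ ((j+n).factorial : ℝ) := by
      have hd : n.factorial * j.factorial ∣ (j+n).factorial := by
        rw [show j + n = n + j by omega]
        exact Nat.factorial_mul_factorial_dvd_factorial_add n j
      exact_mod_cast Nat.le_of_dvd (j+n).factorial_pos hd
    calc ‖poch a n‖ * ‖poch b (j+n)‖ * (‖poch c j‖ * ‖poch d j‖) * X^(j+n) * Y^j
        ≤ (K2 * ((n.factorial : ℝ) * t^n)) * (K1 * (‖poch e (j+n)‖ * t^(j+n))) *
          (K3 * (((j.factorial : ℝ))^2 * t^j)) * X^(j+n) * Y^j := by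
          gcongr <;> positivity
    _ = (K2*K1*K3) * (((n.factorial : ℝ) * (j.factorial : ℝ)) *
          ((j.factorial : ℝ) * ‖poch e (j+n)‖ * (t^n * t^(j+n) * t^j) * X^(j+n) * Y^j)) := by
          ring
    _ ≤ (K2*K1*K3) * ((((j+n).factorial : ℝ)) *
          ((j.factorial : ℝ) * ‖poch e (j+n)‖ * (t^n * t^(j+n) * t^j) * X^(j+n) * Y^j)) := by
          gcongr <;> first | exact hfact | positivity
    _ = (K2*K1*K3) * ((t^2*X)^n * (t^2*X*Y)^j) *
          (‖poch e (j+n)‖ * ((j+n).factorial : ℝ) * (j.factorial : ℝ)) := by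
          ring
  -- master bound, case i ≤ j
  have MB2 : ∀ i m : ℕ, ‖f (i, m + i)‖ ≤
      (K1 * K3 * K4) * (((m+i).choose i : ℝ) * X^i * (t^2 * Y)^(m+i)) := by
    intro i m
    rw [hnormf i (m + i)]
    have hna' : (0:ℝ) < ‖poch (a - ((m+i : ℕ):ℂ)) i‖ := by
      rw [norm_pos_iff]
      apply Finset.prod_ne_zero_iff.mpr
      intro k hk
      have hk' : k < i := Finset.mem_range.mp hk
      intro hzero
      apply ha (m + i - k - 1)
      have hcast : ((m + i - k - 1 : ℕ) : ℂ) = ((m+i : ℕ) : ℂ) - (k:ℂ) - 1 := by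
        have h1 : (m + i - k - 1 : ℕ) = m + i - (k + 1) := by omega
        rw [h1, Nat.cast_sub (by omega)]
        push_cast; ring
      rw [hcast]
      have : a - ((m+i : ℕ):ℂ) + (k:ℂ) = 0 := hzero
      linear_combination this
    have hL5 : N1 (m + i) = N1 m * ‖poch (a - ((m+i : ℕ):ℂ)) i‖ := L5b a m i
    rw [hL5]
    have e1 : ‖poch (a - ((m+i:ℕ):ℂ)) i‖ * ‖poch b i‖ * ‖poch c (m+i)‖ * ‖poch d (m+i)‖ *
          X^i * Y^(m+i) /
        (N1 m * ‖poch (a - ((m+i:ℕ):ℂ)) i‖ * ‖poch e i‖ * (i.factorial : ℝ) *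
          ((m+i).factorial : ℝ))
        = ‖poch (a - ((m+i:ℕ):ℂ)) i‖ *
            (‖poch b i‖ * (‖poch c (m+i)‖ * ‖poch d (m+i)‖) * X^i * Y^(m+i)) /
          (‖poch (a - ((m+i:ℕ):ℂ)) i‖ *
            (N1 m * ‖poch e i‖ * (i.factorial : ℝ) * ((m+i).factorial : ℝ))) := by
      ring
    rw [e1, mul_div_mul_left _ _ hna'.ne']
    have hv : 0 < N1 m * ‖poch e i‖ * (i.factorial : ℝ) * ((m+i).factorial : ℝ) :=
      mul_pos (mul_pos (mul_pos (hN1pos m) (hnepos _))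
        (by exact_mod_cast i.factorial_pos)) (by exact_mod_cast (m+i).factorial_pos)
    rw [div_le_iff₀ hv]
    have hb2 : ‖poch b i‖ ≤ K1 * (‖poch e i‖ * t^i) := by
      refine (hnorm_poch_le b i).trans ((hR1 i).trans ?_)
      exact mul_le_mul_of_nonneg_left
        (mul_le_mul_of_nonneg_right (hPRle _) (pow_pos ht0 _).le) hK1
    have hb3 : ‖poch c (m+i)‖ * ‖poch d (m+i)‖
        ≤ K3 * ((((m+i).factorial : ℝ))^2 * t^(m+i)) := by
      refine le_trans ?_ (hR3 (m+i))
      exact mul_le_mul (hnorm_poch_le c (m+i)) (hnorm_poch_le d (m+i)) (norm_nonneg _)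
        (hPCnn (m+i))
    have hch : (((m+i).choose i : ℕ) : ℝ) * (m.factorial : ℝ) * (i.factorial : ℝ)
        = ((m+i).factorial : ℝ) := by
      exact_mod_cast Nat.add_choose_mul_factorial_mul_factorial m i
    calc ‖poch b i‖ * (‖poch c (m+i)‖ * ‖poch d (m+i)‖) * X^i * Y^(m+i)
        ≤ (K1 * (‖poch e i‖ * t^i)) * (K3 * ((((m+i).factorial : ℝ))^2 * t^(m+i))) *
          X^i * Y^(m+i) := by
          gcongr <;> positivity
    _ = (K1*K3) * ‖poch e i‖ * (t^i * t^(m+i)) *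
          (((m+i).factorial : ℝ) * (((m+i).choose i : ℕ) : ℝ) * (m.factorial : ℝ) *
            (i.factorial : ℝ)) * X^i * Y^(m+i) := by
          rw [← hch]; ring
    _ ≤ (K1*K3) * ‖poch e i‖ * (t^i * t^(m+i)) *
          (((m+i).factorial : ℝ) * (((m+i).choose i : ℕ) : ℝ) * (K4 * (t^m * N1 m)) *
            (i.factorial : ℝ)) * X^i * Y^(m+i) := by
          gcongr <;> first | exact hR4 m | positivity
    _ = (K1*K3*K4) * ((((m+i).choose i : ℕ) : ℝ) * X^i * (t^2*Y)^(m+i)) *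
          (N1 m * ‖poch e i‖ * (i.factorial : ℝ) * ((m+i).factorial : ℝ)) := by
          ring
  -- global comparison function
  set W1 : ℕ × ℕ → ℝ := fun p =>
    if p.2 ≤ p.1 then (t^2*X)^(p.1 - p.2) * (t^2*X*Y)^p.2 else 0 with hW1
  set W2 : ℕ × ℕ → ℝ := fun p => ((p.2.choose p.1 : ℕ) : ℝ) * X^p.1 * (t^2*Y)^p.2 with hW2
  have hW1nn : ∀ p, 0 ≤ W1 p := by
    intro p; rw [hW1]; dsimp only
    split
    · positivity
    · exact le_rfl
  have hW2nn : ∀ p, 0 ≤ W2 p := by intro p; rw [hW2]; positivity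
  have hglobal : ∀ p : ℕ × ℕ, ‖f p‖ ≤ (K2*K1*K3) * W1 p + (K1*K3*K4) * W2 p := by
    intro ⟨i, j⟩
    rcases le_total j i with hji | hij
    · have h1 := MB1 j (i - j)
      rw [show j + (i - j) = i by omega] at h1
      have h2 : W1 (i, j) = (t^2*X)^(i-j) * (t^2*X*Y)^j := if_pos hji
      have h3 : 0 ≤ (K1*K3*K4) * W2 (i, j) := mul_nonneg (by positivity) (hW2nn _)
      rw [h2]
      linarith
    · have h1 := MB2 i (j - i)
      rw [show j - i + i = j by omega] at h1
      have h3 : 0 ≤ (K2*K1*K3) * W1 (i, j) := mul_nonneg (by positivity) (hW1nn _)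
      have h2 : W2 (i, j) = ((j.choose i : ℕ) : ℝ) * X^i * (t^2*Y)^j := rfl
      rw [h2]
      linarith
  -- summability of the comparison function
  have hq1a : 0 ≤ t^2*X := by positivity
  have hq2a : 0 ≤ t^2*X*Y := by positivity
  have hq2b : t^2*X*Y < 1 := by nlinarith
  have hS1 : Summable W1 := by
    set φ : ℕ × ℕ → ℕ × ℕ := fun q => (q.1 + q.2, q.2) with hφ
    have hinj : Function.Injective φ := by
      intro p q h
      rw [hφ] at h
      simp only [Prod.mk.injEq] at h
      obtain ⟨h1, h2⟩ := h
      ext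
      · omega
      · exact h2
    have hvan : ∀ p, p ∉ Set.range φ → W1 p = 0 := by
      intro p hp
      rw [hW1]
      dsimp only
      rw [if_neg]
      intro hle
      exact hp ⟨(p.1 - p.2, p.2), by rw [hφ]; ext <;> simp <;> omega⟩
    have hcomp : (W1 ∘ φ) = fun q : ℕ × ℕ => (t^2*X)^q.1 * (t^2*X*Y)^q.2 := by
      funext q
      rw [Function.comp_apply, hφ, hW1]
      dsimp only
      rw [if_pos (Nat.le_add_left _ _), Nat.add_sub_cancel]
    have hbase : Summable (W1 ∘ φ) := by
      rw [hcomp]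
      exact (summable_geometric_of_lt_one hq1a htX).mul_of_nonneg
        (summable_geometric_of_lt_one hq2a hq2b)
        (fun n => pow_nonneg hq1a n) (fun n => pow_nonneg hq2a n)
    exact (Function.Injective.summable_iff hinj hvan).mp hbase
  have hq3a : 0 ≤ t^2*Y := by positivity
  have hS2 : Summable W2 := by
    apply (Equiv.prodComm ℕ ℕ).summable_iff.mp
    have hfib : ∀ j : ℕ, Summable fun i : ℕ => ((j.choose i : ℕ) : ℝ) * X^i * (t^2*Y)^j := by
      intro j
      apply summable_of_ne_finset_zero (s := Finset.range (j+1))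
      intro i hi
      have : j < i := by
        simp only [Finset.mem_range] at hi
        omega
      simp [Nat.choose_eq_zero_of_lt this]
    have htsum : ∀ j : ℕ, ∑' i : ℕ, ((j.choose i : ℕ) : ℝ) * X^i * (t^2*Y)^j
        = ((X + 1) * (t^2*Y))^j := by
      intro j
      rw [tsum_eq_sum (s := Finset.range (j+1)) (by
        intro i hi
        have : j < i := by
          simp only [Finset.mem_range] at hi
          omega
        simp [Nat.choose_eq_zero_of_lt this])]
      have hap := add_pow X 1 j
      rw [show ((X + 1) * (t^2*Y))^j = (X+1)^j * (t^2*Y)^j from mul_pow _ _ _]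
      rw [hap, Finset.sum_mul]
      apply Finset.sum_congr rfl
      intro i _
      simp only [one_pow, mul_one]
      ring
    have : Summable fun q : ℕ × ℕ => ((q.1.choose q.2 : ℕ) : ℝ) * X^q.2 * (t^2*Y)^q.1 := by
      apply (summable_prod_of_nonneg (fun q => by positivity)).mpr
      constructor
      · exact fun j => hfib j
      · simp only
        have heq : (fun j : ℕ => ∑' i : ℕ, ((j.choose i : ℕ) : ℝ) * X^i * (t^2*Y)^j)
            = fun j : ℕ => ((X + 1) * (t^2*Y))^j := funext htsum
        rw [heq]
        apply summable_geometric_of_lt_one (by positivity)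
        calc (X + 1) * (t^2*Y) = t^2 * Y * (1 + X) := by ring
        _ < 1 := htY
    exact this
  have hS : Summable fun p : ℕ × ℕ => ‖f p‖ := by
    apply Summable.of_nonneg_of_le (fun p => norm_nonneg _) hglobal
    exact (hS1.mul_left _).add (hS2.mul_left _)
  -- inner sum identity
  set Cj : ℕ → ℂ := fun j => poch c j * poch d j / (poch (1 - a) j * (Nat.factorial j : ℂ)) *
      ((-y : ℝ) : ℂ) ^ j with hCj
  have hinner : ∀ j : ℕ, ∑' i, f (i, j) = Cj j * gauss (a - j) b e (x : ℂ) := by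
    intro j
    rw [gauss, ← tsum_mul_left]
    apply tsum_congr
    intro i
    have hIne : ((i.factorial : ℂ)) ≠ 0 := Nat.cast_ne_zero.mpr i.factorial_ne_zero
    have hJne : ((j.factorial : ℂ)) ≠ 0 := Nat.cast_ne_zero.mpr j.factorial_ne_zero
    have hyc : ((-y : ℝ) : ℂ) = -(y:ℂ) := by push_cast; ring
    rw [hf, hCj]
    dsimp only
    rw [hyc]
    field_simp
    ring
  -- swapped summability
  have hSsw : Summable fun q : ℕ × ℕ => ‖f (q.2, q.1)‖ :=
    (Equiv.prodComm ℕ ℕ).summable_iff.mpr hS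
  have hpair := (summable_prod_of_nonneg (fun q => norm_nonneg _)).mp hSsw
  constructor
  · apply Summable.of_nonneg_of_le (fun j => norm_nonneg _) _ hpair.2
    intro j
    have h1 : (poch c j * poch d j / (poch (1 - a) j * (Nat.factorial j : ℂ)) *
        ((-y : ℝ) : ℂ) ^ j * gauss (a - j) b e (x : ℂ)) = ∑' i, f (i, j) :=
      (hinner j).symm
    rw [h1]
    exact norm_tsum_le_tsum_norm (hpair.1 j)
  · have hfs : Summable fun q : ℕ × ℕ => f (q.2, q.1) := hSsw.of_norm
    calc H2 a b c d e x y = ∑' p : ℕ × ℕ, f p := rfl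
    _ = ∑' q : ℕ × ℕ, f (q.2, q.1) := ((Equiv.prodComm ℕ ℕ).tsum_eq _).symm
    _ = ∑' (j : ℕ) (i : ℕ), f (i, j) := Summable.tsum_prod' hfs (fun j => (hpair.1 j).of_norm)
    _ = ∑' j : ℕ, Cj j * gauss (a - j) b e (x : ℂ) := tsum_congr hinner
    _ = _ := by rw [hCj]

end
end

section
/- Let a, b, c, d, e ∈ ℂ satisfy 0 < Re b < Re e, e ∉ {0,−1,−2,…} and a ∉ {1,2,3,…}. Then for all real x, y with |x| < 1 and |y|·(1+|x|) < 1: H₂(a,b,c,d,e;x,y) = [Γ(e)/(Γ(b)Γ(e−b))] · ∫₀¹ u^{b−1}(1−u)^{e−b−1}(1−xu)^{−a} · ₂F₁(d, c; 1−a; −y(1−xu)) du, where the ₂F₁ in the integrand is the convergent Gauss series (note |y(1−xu)| ≤ |y|(1+|x|) < 1 for u ∈ [0,1]). -/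
open MeasureTheory Complex Set

noncomputable section

/-!
Expanding `(1 - x u) ^ (-a) ₂F₁(d, c; 1 - a; -y (1 - x u))` by the binomial series of
`(1 - x u) ^ (j - a)` inside each Gauss term gives a double series `∑ A_{ij} (x u) ^ i y ^ j`,
where `A_{ij}` is the `H₂` coefficient without the factor `(b)_i / (e)_i`. Integrating term by term
against `u ^ (b - 1) (1 - u) ^ (e - b - 1)` produces `B(b + i, e - b) = B(b, e - b) (b)_i / (e)_i`,
which restores that factor.

The interchanges are justified by absolute convergence. The ratio `(a - j)_i / (1 - a)_j` is
`± (a)_{i-j}` for `j ≤ i` and `± 1 / (1 - a)_{j-i}` for `i ≤ j`, and a Pochhammer symbol `(z)_k`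
is `k!` up to polynomial factors (from above always, from below when `z` is not a pole), so
`|A_{ij}|` is polynomially bounded by `1 + binom(j, i)`. Since
`∑_i binom(j, i) |x| ^ i |y| ^ j = (|y| (1 + |x|)) ^ j`, this is where `|y| (1 + |x|) < 1` enters.
-/

lemma poch_succ_right (z : ℂ) (k : ℕ) : poch z (k + 1) = poch z k * (z + k) :=
  Finset.prod_range_succ _ _

lemma poch_add (z : ℂ) (m n : ℕ) : poch z (m + n) = poch z m * poch (z + m) n := by
  simp only [poch, Finset.prod_range_add, Nat.cast_add, add_assoc]

lemma poch_succ_left (z : ℂ) (k : ℕ) : poch z (k + 1) = z * poch (z + 1) k := by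
  rw [add_comm k, poch_add]; simp [poch]

lemma poch_eq_ascPochhammer_eval (z : ℂ) (k : ℕ) : poch z k = (ascPochhammer ℂ k).eval z := by
  induction k with
  | zero => simp [poch]
  | succ k ih => rw [poch_succ_right, ih, ascPochhammer_succ_eval]

lemma poch_one_sub_sub_nat (z : ℂ) (k : ℕ) : poch (1 - z - k) k = (-1) ^ k * poch z k := by
  induction k with
  | zero => simp [poch]
  | succ k ih =>
    have h : 1 - z - ((k + 1 : ℕ) : ℂ) + 1 = 1 - z - k := by push_cast; ring
    rw [poch_succ_left, h, ih, poch_succ_right]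
    push_cast
    ring

lemma poch_sub_nat_of_le (a : ℂ) {i j : ℕ} (hji : j ≤ i) :
    poch (a - j) i = (-1) ^ j * poch (1 - a) j * poch a (i - j) := by
  rw [← Nat.add_sub_cancel' hji, poch_add, ← poch_one_sub_sub_nat, Nat.add_sub_cancel_left,
    sub_add_cancel, sub_sub_cancel]

lemma poch_one_sub_of_le (a : ℂ) {i j : ℕ} (hij : i ≤ j) :
    poch (1 - a) j = (-1) ^ i * poch (1 - a) (j - i) * poch (a - j) i := by
  have h : 1 - a + ((j - i : ℕ) : ℂ) = 1 - (a - j) - i := by push_cast [Nat.cast_sub hij]; ring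
  calc poch (1 - a) j = poch (1 - a) (j - i) * poch (1 - a + ((j - i : ℕ) : ℂ)) i := by
        rw [← poch_add, Nat.sub_add_cancel hij]
    _ = (-1) ^ i * poch (1 - a) (j - i) * poch (a - j) i := by
        rw [h, poch_one_sub_sub_nat]; ring

lemma poch_ne_zero {z : ℂ} (hz : ∀ m : ℕ, z + m ≠ 0) (k : ℕ) : poch z k ≠ 0 :=
  Finset.prod_ne_zero_iff.2 fun m _ => hz m

lemma one_sub_add_nat_ne_zero {a : ℂ} (ha : ∀ n : ℕ, a ≠ n + 1) (m : ℕ) : 1 - a + m ≠ 0 :=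
  fun h => ha m (by linear_combination -h)

lemma norm_poch_le_prod (z : ℂ) (k : ℕ) : ‖poch z k‖ ≤ ∏ m ∈ Finset.range k, (‖z‖ + m) := by
  rw [poch, norm_prod]
  gcongr with m
  exact (norm_add_le _ _).trans_eq (by simp)

lemma norm_poch_le_pow (z : ℂ) (k : ℕ) : ‖poch z k‖ ≤ (‖z‖ + k) ^ k := by
  refine (norm_poch_le_prod z k).trans ?_
  simpa using Finset.prod_le_prod (s := Finset.range k) (fun m _ => by positivity)
    fun m hm => (by gcongr; exact_mod_cast (Finset.mem_range.1 hm).le : ‖z‖ + m ≤ ‖z‖ + k)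

lemma norm_poch_le_factorial_mul (z : ℂ) {L : ℕ} (hL : ‖z‖ ≤ L) (k : ℕ) :
    ‖poch z k‖ ≤ k.factorial * ((k : ℝ) + 1) ^ L := by
  calc ‖poch z k‖ ≤ ∏ m ∈ Finset.range k, (((L + 1 : ℕ) : ℝ) + m) :=
        (norm_poch_le_prod z k).trans <| Finset.prod_le_prod (fun _ _ => by positivity)
          fun m _ => by push_cast; linarith
    _ = ((L + 1).ascFactorial k : ℝ) := by rw [Nat.ascFactorial_eq_prod_range]; push_cast; rfl
    _ = k.factorial * ((L + k).choose k : ℝ) := by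
        rw [Nat.ascFactorial_eq_factorial_mul_choose]; push_cast; rfl
    _ ≤ k.factorial * ((k : ℝ) + 1) ^ L := by
        rw [← Nat.choose_symm_add, add_comm]
        gcongr
        exact_mod_cast Nat.choose_add_le_add_one_pow k L

lemma factorial_le_norm_poch_add_nat {z : ℂ} {K : ℕ} (hK : ‖z‖ + 1 ≤ K) (k : ℕ) :
    (k.factorial : ℝ) ≤ ‖poch (z + K) k‖ := by
  rw [← Finset.prod_range_add_one_eq_factorial, poch, norm_prod]
  push_cast
  gcongr with m
  have := norm_sub_norm_le ((K + m : ℕ) : ℂ) (-z)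
  rw [norm_neg, Complex.norm_natCast, sub_neg_eq_add] at this
  push_cast at this
  rw [show z + K + m = K + m + z by ring]
  linarith

lemma exists_factorial_le_mul_norm_poch {z : ℂ} (hz : ∀ m : ℕ, z + m ≠ 0) :
    ∃ C > 0, ∃ N : ℕ, ∀ k : ℕ, (k.factorial : ℝ) ≤ C * ((k : ℝ) + 1) ^ N * ‖poch z k‖ := by
  set K := ⌈‖z‖⌉₊ + 1
  have hK : ‖z‖ + 1 ≤ K := by push_cast [K]; linarith [Nat.le_ceil ‖z‖]
  have hzK : 0 < ‖poch z K‖ := norm_pos_iff.2 (poch_ne_zero hz K)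
  refine ⟨(2 * K) ^ K / ‖poch z K‖, by positivity, K, fun k => ?_⟩
  -- `(z)_K (z + K)_k = (z)_k (z + k)_K`, and the last factor grows polynomially in `k`
  have hswap : ‖poch z K‖ * ‖poch (z + K) k‖ = ‖poch z k‖ * ‖poch (z + k) K‖ := by
    rw [← norm_mul, ← norm_mul, ← poch_add, ← poch_add, add_comm]
  have hgrowth : ‖poch (z + k) K‖ ≤ (2 * K) ^ K * ((k : ℝ) + 1) ^ K := by
    rw [← mul_pow]
    refine (norm_poch_le_pow _ _).trans (pow_le_pow_left₀ (by positivity) ?_ K)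
    have hzk : ‖z + k‖ ≤ ‖z‖ + k := (norm_add_le _ _).trans_eq (by simp)
    have hk : (k : ℝ) ≤ K * k := le_mul_of_one_le_left (by positivity) (by linarith [norm_nonneg z])
    linarith
  rw [div_mul_eq_mul_div, div_mul_eq_mul_div, le_div_iff₀ hzK]
  calc (k.factorial : ℝ) * ‖poch z K‖ ≤ ‖poch (z + K) k‖ * ‖poch z K‖ := by
        gcongr; exact factorial_le_norm_poch_add_nat hK k
    _ = ‖poch z k‖ * ‖poch (z + k) K‖ := by rw [mul_comm, hswap]
    _ ≤ ‖poch z k‖ * ((2 * K) ^ K * ((k : ℝ) + 1) ^ K) := by gcongr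
    _ = _ := by ring

lemma exists_norm_poch_sub_nat_mul_factorial_le {a : ℂ} (ha : ∀ n : ℕ, a ≠ n + 1) {L : ℕ}
    (hL : ‖a‖ ≤ L) : ∃ C > 0, ∃ N : ℕ, ∀ i j : ℕ, ‖poch (a - j) i‖ * j.factorial ≤
      ‖poch (1 - a) j‖ * i.factorial *
        (((i : ℝ) + 1) ^ L + C * ((j : ℝ) + 1) ^ N * j.choose i) := by
  obtain ⟨C, hC, N, hlow⟩ := exists_factorial_le_mul_norm_poch (one_sub_add_nat_ne_zero ha)
  refine ⟨C, hC, N, fun i j => ?_⟩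
  rcases le_total j i with hji | hij
  · have hfact : (j.factorial * (i - j).factorial : ℝ) ≤ i.factorial := by
      exact_mod_cast Nat.le_of_dvd i.factorial_pos (Nat.factorial_mul_factorial_dvd_factorial hji)
    have hpow : ((i - j : ℕ) + 1 : ℝ) ^ L ≤ ((i : ℝ) + 1) ^ L := by
      gcongr; exact_mod_cast Nat.sub_le i j
    rw [poch_sub_nat_of_le a hji, norm_mul, norm_mul, norm_pow, norm_neg, norm_one, one_pow,
      one_mul]
    calc ‖poch (1 - a) j‖ * ‖poch a (i - j)‖ * j.factorial
        ≤ ‖poch (1 - a) j‖ * ((i - j).factorial * ((i - j : ℕ) + 1 : ℝ) ^ L) * j.factorial := by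
          gcongr; exact norm_poch_le_factorial_mul a hL _
      _ = ‖poch (1 - a) j‖ * ((j.factorial * (i - j).factorial) * ((i - j : ℕ) + 1 : ℝ) ^ L) := by
          ring
      _ ≤ ‖poch (1 - a) j‖ * (i.factorial * ((i : ℝ) + 1) ^ L) := by gcongr
      _ = ‖poch (1 - a) j‖ * i.factorial * ((i : ℝ) + 1) ^ L := by ring
      _ ≤ _ := by gcongr; exact le_add_of_nonneg_right (by positivity)
  · have hnorm : ‖poch (1 - a) j‖ = ‖poch (1 - a) (j - i)‖ * ‖poch (a - j) i‖ := by
      rw [poch_one_sub_of_le a hij, norm_mul, norm_mul, norm_pow, norm_neg, norm_one, one_pow,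
        one_mul]
    have hchoose : (j.choose i * i.factorial * (j - i).factorial : ℝ) = j.factorial := by
      exact_mod_cast Nat.choose_mul_factorial_mul_factorial hij
    have hpow : ((j - i : ℕ) + 1 : ℝ) ^ N ≤ ((j : ℝ) + 1) ^ N := by
      gcongr; exact_mod_cast Nat.sub_le j i
    calc ‖poch (a - j) i‖ * j.factorial
        = ‖poch (a - j) i‖ * j.choose i * i.factorial * (j - i).factorial := by
          rw [← hchoose]; ring
      _ ≤ ‖poch (a - j) i‖ * j.choose i * i.factorial *
            (C * ((j : ℝ) + 1) ^ N * ‖poch (1 - a) (j - i)‖) := by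
          gcongr
          exact (hlow _).trans (by gcongr)
      _ = ‖poch (1 - a) j‖ * i.factorial * (C * ((j : ℝ) + 1) ^ N * j.choose i) := by
          rw [hnorm]; ring
      _ ≤ _ := by gcongr; exact le_add_of_nonneg_left (by positivity)

lemma summable_succ_pow_mul_geometric (N : ℕ) {r : ℝ} (hr0 : 0 ≤ r) (hr : r < 1) :
    Summable fun n : ℕ => ((n : ℝ) + 1) ^ N * r ^ n := by
  refine Summable.of_nonneg_of_le (fun n => by positivity) (fun n => ?_)
    ((summable_choose_mul_geometric_of_norm_lt_one N (by rwa [Real.norm_of_nonneg hr0])).mul_left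
      (N.factorial : ℝ))
  have h : (n + 1) ^ N ≤ N.factorial * (n + N).choose N :=
    (Nat.pow_succ_le_ascFactorial (n + 1) N).trans_eq (Nat.ascFactorial_eq_factorial_mul_choose n N)
  rw [← mul_assoc]
  gcongr
  exact_mod_cast h

lemma summable_choose_mul_pow_mul_pow (M : ℕ) {r s : ℝ} (hr : 0 ≤ r) (hs : 0 ≤ s)
    (hrs : s * (1 + r) < 1) :
    Summable fun p : ℕ × ℕ => ((p.2 : ℝ) + 1) ^ M * p.2.choose p.1 * r ^ p.1 * s ^ p.2 := by
  have hvanish : ∀ j i, i ∉ Finset.range (j + 1) →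
      ((j : ℝ) + 1) ^ M * j.choose i * r ^ i * s ^ j = 0 := fun j i hi => by
    rw [Nat.choose_eq_zero_of_lt (by simpa using hi)]; simp
  have hrow : ∀ j : ℕ, ∑' i, ((j : ℝ) + 1) ^ M * j.choose i * r ^ i * s ^ j =
      ((j : ℝ) + 1) ^ M * (s * (1 + r)) ^ j := fun j => by
    rw [tsum_eq_sum (hvanish j), mul_pow, add_comm 1 r, add_pow r 1 j, Finset.mul_sum,
      Finset.mul_sum]
    exact Finset.sum_congr rfl fun i _ => by ring
  have hswap : Summable fun q : ℕ × ℕ => ((q.1 : ℝ) + 1) ^ M * q.1.choose q.2 * r ^ q.2 * s ^ q.1 :=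
    (summable_prod_of_nonneg fun _ => by positivity).2
      ⟨fun j => summable_of_ne_finset_zero (hvanish j),
        by simpa only [hrow] using summable_succ_pow_mul_geometric M (by positivity) hrs⟩
  exact (Equiv.prodComm ℕ ℕ).summable_iff.1 hswap

/-- The coefficient of `t ^ i * y ^ j` in `(1 - t) ^ (-a) * ₂F₁(d, c; 1 - a; -y (1 - t))`. -/

def integrandCoeff (a c d : ℂ) (p : ℕ × ℕ) : ℂ :=
  (-1) ^ p.2 * poch (a - p.2) p.1 * poch c p.2 * poch d p.2 /
    (poch (1 - a) p.2 * p.1.factorial * p.2.factorial)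

lemma exists_norm_integrandCoeff_le {a : ℂ} (c d : ℂ) (ha : ∀ n : ℕ, a ≠ n + 1) :
    ∃ C > 0, ∃ N L : ℕ, ∀ i j : ℕ, ‖integrandCoeff a c d (i, j)‖ ≤
      (((i : ℝ) + 1) ^ L + C * ((j : ℝ) + 1) ^ N * j.choose i) * ((j : ℝ) + 1) ^ (2 * L) := by
  set L := ⌈‖a‖ + ‖c‖ + ‖d‖⌉₊
  have hL : ‖a‖ + ‖c‖ + ‖d‖ ≤ L := Nat.le_ceil _
  obtain ⟨C, hC, N, hQ⟩ := exists_norm_poch_sub_nat_mul_factorial_le ha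
    (L := L) (by linarith [norm_nonneg c, norm_nonneg d])
  refine ⟨C, hC, N, L, fun i j => ?_⟩
  have hc := norm_poch_le_factorial_mul c (L := L) (by linarith [norm_nonneg a, norm_nonneg d]) j
  have hd := norm_poch_le_factorial_mul d (L := L) (by linarith [norm_nonneg a, norm_nonneg c]) j
  have hpos : 0 < ‖poch (1 - a) j‖ := norm_pos_iff.2 (poch_ne_zero (one_sub_add_nat_ne_zero ha) j)
  simp only [integrandCoeff, norm_div, norm_mul, norm_pow, norm_neg, norm_one, one_pow, one_mul,
    Complex.norm_natCast]
  rw [div_le_iff₀ (by positivity)]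
  calc ‖poch (a - j) i‖ * ‖poch c j‖ * ‖poch d j‖
      ≤ ‖poch (a - j) i‖ * (j.factorial * ((j : ℝ) + 1) ^ L) *
          (j.factorial * ((j : ℝ) + 1) ^ L) := by
        gcongr
    _ = ‖poch (a - j) i‖ * j.factorial * (j.factorial * ((j : ℝ) + 1) ^ (2 * L)) := by ring
    _ ≤ ‖poch (1 - a) j‖ * i.factorial *
          (((i : ℝ) + 1) ^ L + C * ((j : ℝ) + 1) ^ N * j.choose i) *
          (j.factorial * ((j : ℝ) + 1) ^ (2 * L)) :=
        mul_le_mul_of_nonneg_right (hQ i j) (by positivity)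
    _ = _ := by ring

lemma summable_norm_integrandCoeff_mul {a : ℂ} (c d : ℂ) (ha : ∀ n : ℕ, a ≠ n + 1) {r s : ℝ}
    (hr0 : 0 ≤ r) (hr : r < 1) (hs0 : 0 ≤ s) (hrs : s * (1 + r) < 1) :
    Summable fun p : ℕ × ℕ => ‖integrandCoeff a c d p‖ * r ^ p.1 * s ^ p.2 := by
  obtain ⟨C, hC, N, L, hA⟩ := exists_norm_integrandCoeff_le c d ha
  have hs : s < 1 := by nlinarith
  have hprod := (summable_succ_pow_mul_geometric L hr0 hr).mul_of_nonneg
    (summable_succ_pow_mul_geometric (2 * L) hs0 hs) (fun _ => by positivity)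
    (fun _ => by positivity)
  have hchoose := (summable_choose_mul_pow_mul_pow (N + 2 * L) hr0 hs0 hrs).mul_left C
  refine (hprod.add hchoose).of_nonneg_of_le (fun _ => by positivity) fun ⟨i, j⟩ => ?_
  grw [hA i j]
  exact le_of_eq (by ring)

lemma hasSum_poch_div_factorial_mul_pow (w : ℂ) {z : ℂ} (hz : ‖z‖ < 1) :
    HasSum (fun n => poch w n / (n.factorial : ℂ) * z ^ n) ((1 - z) ^ (-w)) := by
  have h := (Complex.one_div_one_sub_cpow_hasFPowerSeriesOnBall_zero w).hasSum
    (y := z) (by simpa [enorm_eq_nnnorm, ← NNReal.coe_lt_coe] using hz)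
  simp only [zero_add, FormalMultilinearSeries.ofScalars_apply_eq, smul_eq_mul, one_div,
    ← Complex.cpow_neg] at h
  convert! h using 3 with n
  rw [← Ring.multichoose_eq, ← nsmul_right_inj (Nat.factorial_ne_zero n),
    Ring.factorial_nsmul_multichoose_eq_ascPochhammer, Polynomial.ascPochhammer_smeval_eq_eval,
    ← poch_eq_ascPochhammer_eval, nsmul_eq_mul]
  exact mul_div_cancel₀ _ (Nat.cast_ne_zero.2 n.factorial_ne_zero)

lemma hasSum_integrandCoeff {a : ℂ} (c d : ℂ) (ha : ∀ n : ℕ, a ≠ n + 1) {t y : ℂ}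
    (ht : ‖t‖ < 1) (hy : ‖y‖ * (1 + ‖t‖) < 1) :
    HasSum (fun p : ℕ × ℕ => integrandCoeff a c d p * t ^ p.1 * y ^ p.2)
      ((1 - t) ^ (-a) * gauss d c (1 - a) (-y * (1 - t))) := by
  set f := fun p : ℕ × ℕ => integrandCoeff a c d p * t ^ p.1 * y ^ p.2
  have hf : Summable f := .of_norm <| by
    simpa [f, norm_mul, norm_pow, mul_assoc] using
      summable_norm_integrandCoeff_mul c d ha (norm_nonneg t) ht (norm_nonneg y) hy
  have h1t : 1 - t ≠ 0 := fun h => by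
    rw [← eq_of_sub_eq_zero h, norm_one] at ht; exact lt_irrefl _ ht
  -- summing over `i` first is the binomial series of `(1 - t) ^ (j - a)`
  have hfiber : ∀ j : ℕ, HasSum (fun i => f (i, j)) ((1 - t) ^ (-a) *
      (poch d j * poch c j / (poch (1 - a) j * j.factorial) * (-y * (1 - t)) ^ j)) := fun j => by
    convert! (hasSum_poch_div_factorial_mul_pow (a - j) ht).mul_left
      ((-1) ^ j * poch c j * poch d j / (poch (1 - a) j * j.factorial) * y ^ j) using 1
    · funext i; simp only [f, integrandCoeff]; ring
    · rw [neg_sub, sub_eq_add_neg (j : ℂ), Complex.cpow_add _ _ h1t, Complex.cpow_natCast,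
        mul_pow (-y), neg_pow y]
      ring
  have hg := ((Equiv.prodComm ℕ ℕ).hasSum_iff.2 hf.hasSum).prod_fiberwise hfiber
  rw [gauss, ← tsum_mul_left, hg.tsum_eq]
  exact hf.hasSum

lemma one_sub_mul_cpow_mul_gauss_eq_tsum {a : ℂ} (c d : ℂ) (ha : ∀ n : ℕ, a ≠ n + 1)
    {x y u : ℝ} (hx : |x| < 1) (hy : |y| * (1 + |x|) < 1) (hu : u ∈ Icc (0 : ℝ) 1) :
    ((1 - x * u : ℝ) : ℂ) ^ (-a) * gauss d c (1 - a) ((-y * (1 - x * u) : ℝ) : ℂ) =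
      ∑' p, integrandCoeff a c d p * (x : ℂ) ^ p.1 * (y : ℂ) ^ p.2 * (u : ℂ) ^ p.1 := by
  have hxu : ‖(x : ℂ) * u‖ ≤ |x| := by
    rw [norm_mul, Complex.norm_real, Complex.norm_real, Real.norm_eq_abs, Real.norm_of_nonneg hu.1]
    exact mul_le_of_le_one_right (abs_nonneg x) hu.2
  have hyxu : ‖(y : ℂ)‖ * (1 + ‖(x : ℂ) * u‖) < 1 := by
    rw [Complex.norm_real, Real.norm_eq_abs]
    exact (mul_le_mul_of_nonneg_left (by linarith) (abs_nonneg y)).trans_lt hy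
  push_cast
  rw [← (hasSum_integrandCoeff c d ha (hxu.trans_lt hx) hyxu).tsum_eq]
  exact tsum_congr fun p => by ring

lemma Gamma_add_nat_eq_mul_poch {s : ℂ} (hs : 0 < s.re) (n : ℕ) :
    Complex.Gamma (s + n) = Complex.Gamma s * poch s n := by
  have hpole : ∀ k : ℕ, s ≠ -k := fun k h => by
    have := congrArg Complex.re h
    simp only [Complex.neg_re, Complex.natCast_re] at this
    linarith [(k.cast_nonneg : (0 : ℝ) ≤ k)]
  rw [poch_eq_ascPochhammer_eval, ← Complex.Gamma_add_nat_div_Gamma_eq s hpole,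
    mul_div_cancel₀ _ (Complex.Gamma_ne_zero_of_re_pos hs)]

lemma betaIntegral_add_nat {s t : ℂ} (hs : 0 < s.re) (ht : 0 < t.re) (n : ℕ) :
    Complex.betaIntegral (s + n) t = Complex.betaIntegral s t * poch s n / poch (s + t) n := by
  have hst : 0 < (s + t).re := by rw [Complex.add_re]; linarith
  have hsn : 0 < (s + n).re := by simp only [Complex.add_re, Complex.natCast_re]; positivity
  have hΓ := Complex.Gamma_ne_zero_of_re_pos hst
  have hpoch : poch (s + t) n ≠ 0 := by
    have := Complex.Gamma_ne_zero_of_re_pos (s := s + t + n)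
      (by rw [Complex.add_re, Complex.natCast_re]; linarith [n.cast_nonneg (α := ℝ)])
    rw [Gamma_add_nat_eq_mul_poch hst] at this
    exact right_ne_zero_of_mul this
  have h0 := Complex.Gamma_mul_Gamma_eq_betaIntegral hs ht
  have hn := Complex.Gamma_mul_Gamma_eq_betaIntegral hsn ht
  rw [show s + n + t = s + t + n by ring, Gamma_add_nat_eq_mul_poch hs,
    Gamma_add_nat_eq_mul_poch hst] at hn
  rw [eq_div_iff hpoch]
  apply mul_left_cancel₀ hΓ
  linear_combination poch s n * h0 - hn

lemma Gamma_add_div_mul_betaIntegral {s t : ℂ} (hs : 0 < s.re) (ht : 0 < t.re) :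
    Complex.Gamma (s + t) / (Complex.Gamma s * Complex.Gamma t) * Complex.betaIntegral s t = 1 := by
  rw [div_mul_eq_mul_div, ← Complex.Gamma_mul_Gamma_eq_betaIntegral hs ht,
    div_self (mul_ne_zero (Complex.Gamma_ne_zero_of_re_pos hs)
      (Complex.Gamma_ne_zero_of_re_pos ht))]

lemma integral_beta_mul_tsum {ι : Type*} [Countable ι] {s t : ℂ} (hs : 0 < s.re) (ht : 0 < t.re)
    (c : ι → ℂ) (n : ι → ℕ) (hc : Summable fun p => ‖c p‖) :
    ∫ u in (0 : ℝ)..1, (u : ℂ) ^ (s - 1) * (1 - (u : ℂ)) ^ (t - 1) * ∑' p, c p * (u : ℂ) ^ n p =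
      ∑' p, c p * Complex.betaIntegral (s + n p) t := by
  set β : ℝ → ℂ := fun u => (u : ℂ) ^ (s - 1) * (1 - (u : ℂ)) ^ (t - 1)
  set F : ι → ℝ → ℂ := fun p u => β u * (c p * (u : ℂ) ^ n p)
  have hpow : ∀ p, ∀ u ∈ Ioc (0 : ℝ) 1,
      F p u = c p * ((u : ℂ) ^ (s + n p - 1) * (1 - (u : ℂ)) ^ (t - 1)) := fun p u hu => by
    have hu0 : (u : ℂ) ≠ 0 := Complex.ofReal_ne_zero.2 hu.1.ne'
    simp only [F, β]
    rw [show s + n p - 1 = s - 1 + n p by ring, Complex.cpow_add _ _ hu0, Complex.cpow_natCast]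
    ring
  have hβ : IntegrableOn β (Ioc 0 1) :=
    (intervalIntegrable_iff_integrableOn_Ioc_of_le zero_le_one).1
      (Complex.betaIntegral_convergent hs ht)
  have hF : ∀ p, IntegrableOn (F p) (Ioc 0 1) := fun p => by
    have hsn : 0 < (s + n p).re := by
      simp only [Complex.add_re, Complex.natCast_re]; positivity
    refine IntegrableOn.congr_fun ?_ (fun u hu => (hpow p u hu).symm) measurableSet_Ioc
    exact ((intervalIntegrable_iff_integrableOn_Ioc_of_le zero_le_one).1
      (Complex.betaIntegral_convergent hsn ht)).const_mul (c p)
  -- on `(0, 1]` we have `‖u ^ n‖ ≤ 1`, so the series is dominated by `∑ ‖c p‖ ‖β‖`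
  have hnorm : Summable fun p => ∫ u in Ioc (0 : ℝ) 1, ‖F p u‖ := by
    refine (hc.mul_right (∫ u in Ioc (0 : ℝ) 1, ‖β u‖)).of_nonneg_of_le
      (fun p => integral_nonneg fun u => norm_nonneg _) fun p => ?_
    rw [← integral_const_mul]
    refine setIntegral_mono_on (hF p).norm (hβ.norm.const_mul _) measurableSet_Ioc fun u hu => ?_
    simp only [F, norm_mul, norm_pow, Complex.norm_real, Real.norm_of_nonneg hu.1.le]
    calc ‖β u‖ * (‖c p‖ * u ^ n p) ≤ ‖β u‖ * (‖c p‖ * 1) := by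
          gcongr; exact pow_le_one₀ hu.1.le hu.2
      _ = ‖c p‖ * ‖β u‖ := by ring
  rw [intervalIntegral.integral_of_le zero_le_one]
  simp_rw [← tsum_mul_left]
  rw [← integral_tsum_of_summable_integral_norm hF hnorm]
  refine tsum_congr fun p => ?_
  rw [setIntegral_congr_fun measurableSet_Ioc (hpow p), integral_const_mul,
    Complex.betaIntegral, intervalIntegral.integral_of_le zero_le_one]

theorem H2_single_integral_representation_general
    (a b c d e : ℂ)
    (hb : 0 < b.re) (hbe : b.re < e.re)
    (ha : ∀ n : ℕ, a ≠ (n : ℂ) + 1)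
    (x y : ℝ) (hx : |x| < 1) (hy : |y| * (1 + |x|) < 1) :
    H2 a b c d e x y =
      Complex.Gamma e / (Complex.Gamma b * Complex.Gamma (e - b)) *
      ∫ u in (0:ℝ)..1,
        (u : ℂ) ^ (b - 1) * ((1 - u : ℝ) : ℂ) ^ (e - b - 1) *
        ((1 - x * u : ℝ) : ℂ) ^ (-a) *
        gauss d c (1 - a) ((-y * (1 - x * u) : ℝ) : ℂ) := by
  have heb : 0 < (e - b).re := by rw [Complex.sub_re]; linarith
  set coeff : ℕ × ℕ → ℂ := fun p => integrandCoeff a c d p * (x : ℂ) ^ p.1 * (y : ℂ) ^ p.2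
  have hcoeff : Summable fun p => ‖coeff p‖ := by
    simpa [coeff, norm_mul, norm_pow, mul_assoc] using
      summable_norm_integrandCoeff_mul c d ha (abs_nonneg x) hx (abs_nonneg y) hy
  have hexpand : EqOn (fun u : ℝ => (u : ℂ) ^ (b - 1) * ((1 - u : ℝ) : ℂ) ^ (e - b - 1) *
        ((1 - x * u : ℝ) : ℂ) ^ (-a) * gauss d c (1 - a) ((-y * (1 - x * u) : ℝ) : ℂ))
      (fun u : ℝ => (u : ℂ) ^ (b - 1) * (1 - (u : ℂ)) ^ (e - b - 1) *
        ∑' p, coeff p * (u : ℂ) ^ p.1) (uIcc 0 1) := fun u hu => by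
    rw [uIcc_of_le zero_le_one] at hu
    dsimp only
    rw [mul_assoc _ (((1 - x * u : ℝ) : ℂ) ^ (-a)),
      one_sub_mul_cpow_mul_gauss_eq_tsum c d ha hx hy hu, Complex.ofReal_sub, Complex.ofReal_one]
  have hB := Gamma_add_div_mul_betaIntegral hb heb
  rw [add_sub_cancel] at hB
  rw [intervalIntegral.integral_congr hexpand, integral_beta_mul_tsum hb heb coeff Prod.fst hcoeff,
    ← tsum_mul_left, H2]
  refine tsum_congr fun p => ?_
  rw [betaIntegral_add_nat hb heb, add_sub_cancel]
  calc _ = coeff p * (poch b p.1 / poch e p.1) := by simp only [coeff, integrandCoeff]; ring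
    _ = _ := by linear_combination (-(coeff p * (poch b p.1 / poch e p.1))) * hB

theorem H2_single_integral_representation
    (a b c d e : ℂ)
    (hb : 0 < b.re) (hbe : b.re < e.re)
    (he : ∀ n : ℕ, e ≠ -(n : ℂ)) (ha : ∀ n : ℕ, a ≠ (n : ℂ) + 1)
    (x y : ℝ) (hx : |x| < 1) (hy : |y| * (1 + |x|) < 1) :
    H2 a b c d e x y =
      Complex.Gamma e / (Complex.Gamma b * Complex.Gamma (e - b)) *
      ∫ u in (0:ℝ)..1,
        (u : ℂ) ^ (b - 1) * ((1 - u : ℝ) : ℂ) ^ (e - b - 1) *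
        ((1 - x * u : ℝ) : ℂ) ^ (-a) *
        gauss d c (1 - a) ((-y * (1 - x * u) : ℝ) : ℂ) :=
  H2_single_integral_representation_general a b c d e hb hbe ha x y hx hy

end
end

section
/- Let a, b, c ∈ ℂ with Re c > Re b > 0, let p > 0 be real and let z < 1 be real. Then the Euler-integral hypergeometric function satisfies F(a,b;c;z) = p^{−b} · F₁(b; c−a, a; c; (p−1)/p, (z+p−1)/p), where F₁ is given by its Euler integral (well defined since Re c > Re b > 0 and both arguments (p−1)/p and (z+p−1)/p are real numbers less than 1). -/
open MeasureTheory Complex Set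

noncomputable section

/-- Euler-integral Gauss hypergeometric function `F(a,b;c;w)` for real `w < 1`. -/
def eulerF (a b c : ℂ) (w : ℝ) : ℂ :=
  Complex.Gamma c / (Complex.Gamma b * Complex.Gamma (c - b)) *
    ∫ t in (0:ℝ)..1, (t : ℂ) ^ (b - 1) * ((1 - t : ℝ) : ℂ) ^ (c - b - 1) *
      ((1 - w * t : ℝ) : ℂ) ^ (-a)

/-- Appell's first hypergeometric function `F₁(α;β,β';γ;x,w)` by its Euler integral. -/
def appellF1 (α β β' γ : ℂ) (x w : ℝ) : ℂ :=
  Complex.Gamma γ / (Complex.Gamma α * Complex.Gamma (γ - α)) *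
    ∫ t in (0:ℝ)..1, (t : ℂ) ^ (α - 1) * ((1 - t : ℝ) : ℂ) ^ (γ - α - 1) *
      ((1 - x * t : ℝ) : ℂ) ^ (-β) * ((1 - w * t : ℝ) : ℂ) ^ (-β')

/-!
The substitution `u = t / (p + (1 - p) t)` maps `(0, 1)` onto itself with Jacobian
`p / (p + (1 - p) t)²`. Under it, `u`, `1 - u` and `1 - z u` become `t`, `p (1 - t)` and
`p + (1 - p - z) t` divided by `p + (1 - p) t`, and the factors `p + (1 - p) t` and
`p + (1 - p - z) t` are `p` times the two Appell factors `1 - (p - 1)/p · t` and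
`1 - (z + p - 1)/p · t`. Collecting powers of `p` leaves `p^{-b}` in front of the Appell
integrand, while the Gamma prefactors of the two Euler integrals coincide.
-/

def moebius (p t : ℝ) : ℝ := t / (p + (1 - p) * t)

section Moebius

variable {p t : ℝ}

lemma moebius_denom_pos (hp : 0 < p) (ht : t ∈ Ioo 0 1) : 0 < p + (1 - p) * t := by
  nlinarith [ht.1, ht.2]

lemma moebius_inv_moebius (hp : 0 < p) (ht : t ∈ Ioo 0 1) : moebius p⁻¹ (moebius p t) = t := by
  have hD := (moebius_denom_pos hp ht).ne'
  have hp0 := hp.ne'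
  rw [moebius, moebius]
  set D := p + (1 - p) * t with hD_def
  have hden : p⁻¹ + (1 - p⁻¹) * (t / D) = D⁻¹ := by
    field_simp
    rw [hD_def]
    ring
  rw [hden, div_inv_eq_mul, div_mul_cancel₀ _ hD]

lemma mapsTo_moebius (hp : 0 < p) : MapsTo (moebius p) (Ioo 0 1) (Ioo 0 1) := by
  intro t ht
  have hD := moebius_denom_pos hp ht
  exact ⟨div_pos ht.1 hD, (div_lt_one hD).2 (by nlinarith [ht.1, ht.2])⟩

lemma bijOn_moebius (hp : 0 < p) : BijOn (moebius p) (Ioo 0 1) (Ioo 0 1) :=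
  have hinv : InvOn (moebius p⁻¹) (moebius p) (Ioo 0 1) (Ioo 0 1) :=
    ⟨fun _ ht => moebius_inv_moebius hp ht,
      fun u hu => by simpa using moebius_inv_moebius (inv_pos.2 hp) hu⟩
  hinv.bijOn (mapsTo_moebius hp) (mapsTo_moebius (inv_pos.2 hp))

lemma one_sub_moebius (hD : p + (1 - p) * t ≠ 0) :
    1 - moebius p t = p * (1 - t) / (p + (1 - p) * t) := by
  rw [moebius, one_sub_div hD]
  ring

lemma one_sub_mul_moebius (z : ℝ) (hD : p + (1 - p) * t ≠ 0) :
    1 - z * moebius p t = (p + (1 - p) * t - z * t) / (p + (1 - p) * t) := by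
  rw [moebius, mul_div_assoc', one_sub_div hD]

lemma hasDerivAt_moebius (hD : p + (1 - p) * t ≠ 0) :
    HasDerivAt (moebius p) (p / (p + (1 - p) * t) ^ 2) t := by
  have hden : HasDerivAt (fun t => p + (1 - p) * t) (1 - p) t := by
    simpa using ((hasDerivAt_id t).const_mul (1 - p)).const_add p
  have h := (hasDerivAt_id' t).div hden hD
  rwa [show 1 * (p + (1 - p) * t) - t * (1 - p) = p by ring] at h

theorem integral_Ioo_comp_moebius {E : Type*} [NormedAddCommGroup E] [NormedSpace ℝ E]
    (hp : 0 < p) (g : ℝ → E) :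
    ∫ u in Ioo 0 1, g u = ∫ t in Ioo 0 1, (p / (p + (1 - p) * t) ^ 2) • g (moebius p t) := by
  have hderiv : ∀ t ∈ Ioo (0 : ℝ) 1,
      HasDerivWithinAt (moebius p) (p / (p + (1 - p) * t) ^ 2) (Ioo 0 1) t := fun t ht =>
    (hasDerivAt_moebius (moebius_denom_pos hp ht).ne').hasDerivWithinAt
  conv_lhs => rw [← (bijOn_moebius hp).image_eq]
  rw [integral_image_eq_integral_abs_deriv_smul measurableSet_Ioo hderiv
    (bijOn_moebius hp).injOn]
  refine setIntegral_congr_fun measurableSet_Ioo fun t ht => ?_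
  rw [abs_of_pos (div_pos hp (pow_pos (moebius_denom_pos hp ht) 2))]

end Moebius

def eulerIntegrand (a b c : ℂ) (w t : ℝ) : ℂ :=
  (t : ℂ) ^ (b - 1) * ((1 - t : ℝ) : ℂ) ^ (c - b - 1) * ((1 - w * t : ℝ) : ℂ) ^ (-a)

def appellIntegrand (α β β' γ : ℂ) (x w t : ℝ) : ℂ :=
  (t : ℂ) ^ (α - 1) * ((1 - t : ℝ) : ℂ) ^ (γ - α - 1) *
    ((1 - x * t : ℝ) : ℂ) ^ (-β) * ((1 - w * t : ℝ) : ℂ) ^ (-β')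

lemma eulerF_eq_integral_Ioo (a b c : ℂ) (w : ℝ) :
    eulerF a b c w = Gamma c / (Gamma b * Gamma (c - b)) *
      ∫ t in Ioo 0 1, eulerIntegrand a b c w t := by
  rw [eulerF, intervalIntegral.integral_of_le zero_le_one, integral_Ioc_eq_integral_Ioo]
  rfl

lemma appellF1_eq_integral_Ioo (α β β' γ : ℂ) (x w : ℝ) :
    appellF1 α β β' γ x w = Gamma γ / (Gamma α * Gamma (γ - α)) *
      ∫ t in Ioo 0 1, appellIntegrand α β β' γ x w t := by
  rw [appellF1, intervalIntegral.integral_of_le zero_le_one, integral_Ioc_eq_integral_Ioo]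
  rfl

lemma ofReal_cpow_eq_exp_log {x : ℝ} (hx : 0 < x) (w : ℂ) :
    (x : ℂ) ^ w = exp (w * Real.log x) := by
  rw [cpow_def_of_ne_zero (ofReal_ne_zero.2 hx.ne'), ofReal_log hx.le, mul_comm]

lemma ofReal_eq_exp_log {x : ℝ} (hx : 0 < x) : (x : ℂ) = exp (Real.log x) := by
  rw [← ofReal_exp, Real.exp_log hx]

lemma smul_eulerIntegrand_moebius {p z t : ℝ} (a b c : ℂ) (hp : 0 < p) (hz : z < 1)
    (ht : t ∈ Ioo 0 1) :
    (p / (p + (1 - p) * t) ^ 2) • eulerIntegrand a b c z (moebius p t) =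
      (p : ℂ) ^ (-b) * appellIntegrand b (c - a) a c ((p - 1) / p) ((z + p - 1) / p) t := by
  have hD : 0 < p + (1 - p) * t := moebius_denom_pos hp ht
  obtain ⟨ht0, ht1⟩ := ht
  simp only [eulerIntegrand, appellIntegrand, Complex.real_smul]
  rw [one_sub_moebius hD.ne', one_sub_mul_moebius z hD.ne', moebius]
  set D := p + (1 - p) * t
  have hE : 0 < D - z * t := by nlinarith
  have h1t : 0 < 1 - t := by linarith
  have hx : 1 - (p - 1) / p * t = D / p := by
    field_simp
    ring
  have hw : 1 - (z + p - 1) / p * t = (D - z * t) / p := by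
    field_simp
    ring
  -- every base is a positive real, so the identity is a linear relation between logarithms
  rw [hx, hw, ofReal_eq_exp_log (by positivity : 0 < p / D ^ 2),
    ofReal_cpow_eq_exp_log (div_pos ht0 hD), ofReal_cpow_eq_exp_log (by positivity),
    ofReal_cpow_eq_exp_log (div_pos hE hD), ofReal_cpow_eq_exp_log hp,
    ofReal_cpow_eq_exp_log ht0, ofReal_cpow_eq_exp_log h1t,
    ofReal_cpow_eq_exp_log (div_pos hD hp), ofReal_cpow_eq_exp_log (div_pos hE hp)]
  simp only [← exp_add]
  congr 1
  rw [Real.log_div hp.ne' (by positivity), Real.log_pow, Real.log_div ht0.ne' hD.ne',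
    Real.log_div (by positivity) hD.ne', Real.log_mul hp.ne' h1t.ne',
    Real.log_div hE.ne' hD.ne', Real.log_div hD.ne' hp.ne', Real.log_div hE.ne' hp.ne']
  push_cast
  ring

theorem Gauss_as_AppellF1_phi_p_general
    (a b c : ℂ)
    (p : ℝ) (hp : 0 < p) (z : ℝ) (hz : z < 1) :
    eulerF a b c z =
      ((p : ℝ) : ℂ) ^ (-b) *
      appellF1 b (c - a) a c ((p - 1) / p) ((z + p - 1) / p) := by
  rw [eulerF_eq_integral_Ioo, appellF1_eq_integral_Ioo, integral_Ioo_comp_moebius hp,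
    setIntegral_congr_fun measurableSet_Ioo fun t ht =>
      smul_eulerIntegrand_moebius a b c hp hz ht, integral_const_mul]
  ring

theorem Gauss_as_AppellF1_phi_p
    (a b c : ℂ) (hb : 0 < b.re) (hbc : b.re < c.re)
    (p : ℝ) (hp : 0 < p) (z : ℝ) (hz : z < 1) :
    eulerF a b c z =
      ((p : ℝ) : ℂ) ^ (-b) *
      appellF1 b (c - a) a c ((p - 1) / p) ((z + p - 1) / p) :=
  Gauss_as_AppellF1_phi_p_general a b c p hp z hz
end
end

section
/- Let a, b, c ∈ ℂ with Re c > Re b > 0, let p > 0 be real and let z < 1 be real. Then the Euler-integral hypergeometric function satisfies F(a,b;c;z) = p^{c−b} · (1−z)^{−a} · F₁(c−b; c−a, a; c; 1−p, (1−p−z)/(1−z)), where F₁ is given by its Euler integral (well defined since Re c > Re(c−b) > 0 and both arguments 1−p and (1−p−z)/(1−z) = 1 − p/(1−z) are real numbers less than 1). -/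
/-!
Substitute `t = ψ_p(s) = (1 - s) / (1 - (1 - p) s)` in the Euler integral of `F(a,b;c;z)`.
Writing `D = 1 - (1 - p) s`, one has `1 - t = p s / D`, `1 - z t = (1 - z)(1 - w s) / D` with
`w = (1 - p - z) / (1 - z)`, and `|dt/ds| = p / D²`; the powers of `D` collect to `D^(a - c)`,
and what remains is `p^(c - b) (1 - z)^(-a)` times the Euler integrand of
`F₁(c - b; c - a, a; c; 1 - p, w)`, whose Gamma prefactor is that of `F(a,b;c;z)`.
-/

open MeasureTheory Complex Set

noncomputable section

/-- The paper's substitution `ψ_p`, a Möbius involution of `(0, 1)` exchanging its endpoints. -/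
def psi (p s : ℝ) : ℝ := (1 - s) / (1 - (1 - p) * s)

section Psi

variable {p s : ℝ}

lemma one_sub_mul_psi (x : ℝ) (hs : 1 - (1 - p) * s ≠ 0) :
    1 - x * psi p s = ((1 - s) * (1 - x) + p * s) / (1 - (1 - p) * s) := by
  rw [eq_div_iff hs, sub_mul, psi, mul_assoc, div_mul_cancel₀ _ hs]
  ring

lemma one_sub_psi (hs : 1 - (1 - p) * s ≠ 0) : 1 - psi p s = p * s / (1 - (1 - p) * s) := by
  simpa using one_sub_mul_psi 1 hs

lemma psi_psi (hp : p ≠ 0) (hs : 1 - (1 - p) * s ≠ 0) : psi p (psi p s) = s := by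
  have hden : 1 - (1 - p) * psi p s = p / (1 - (1 - p) * s) := by
    rw [one_sub_mul_psi _ hs]
    ring_nf
  rw [psi, one_sub_psi hs, hden, div_div_div_cancel_right₀ hs, mul_div_cancel_left₀ _ hp]

lemma one_sub_mul_pos (hp : 0 < p) (hs : s ∈ Ioo 0 1) : 0 < 1 - (1 - p) * s := by
  nlinarith [hs.1, hs.2]

lemma mapsTo_psi (hp : 0 < p) : MapsTo (psi p) (Ioo 0 1) (Ioo 0 1) := by
  intro s hs
  have hD := one_sub_mul_pos hp hs
  refine ⟨div_pos (by linarith [hs.2]) hD, ?_⟩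
  rw [psi, div_lt_one hD]
  nlinarith [hs.1]

lemma bijOn_psi (hp : 0 < p) : BijOn (psi p) (Ioo 0 1) (Ioo 0 1) :=
  have hinv : LeftInvOn (psi p) (psi p) (Ioo 0 1) := fun _ hs ↦
    psi_psi hp.ne' (one_sub_mul_pos hp hs).ne'
  InvOn.bijOn ⟨hinv, hinv⟩ (mapsTo_psi hp) (mapsTo_psi hp)

lemma hasDerivAt_psi (hs : 1 - (1 - p) * s ≠ 0) :
    HasDerivAt (psi p) (-p / (1 - (1 - p) * s) ^ 2) s := by
  refine (((hasDerivAt_id' s).const_sub 1).div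
    (((hasDerivAt_id' s).const_mul (1 - p)).const_sub 1) hs).congr_deriv ?_
  ring

theorem integral_zero_one_eq_integral_comp_psi {E : Type*} [NormedAddCommGroup E]
    [NormedSpace ℝ E] (hp : 0 < p) (f : ℝ → E) :
    ∫ t in (0:ℝ)..1, f t = ∫ s in (0:ℝ)..1, (p / (1 - (1 - p) * s) ^ 2) • f (psi p s) := by
  simp only [intervalIntegral.integral_of_le (zero_le_one' ℝ), integral_Ioc_eq_integral_Ioo]
  have hderiv : ∀ s ∈ Ioo (0:ℝ) 1,
      HasDerivWithinAt (psi p) (-p / (1 - (1 - p) * s) ^ 2) (Ioo 0 1) s :=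
    fun s hs ↦ (hasDerivAt_psi (one_sub_mul_pos hp hs).ne').hasDerivWithinAt
  conv_lhs => rw [← (bijOn_psi hp).image_eq]
  rw [integral_image_eq_integral_abs_deriv_smul measurableSet_Ioo hderiv (bijOn_psi hp).injOn]
  refine setIntegral_congr_fun measurableSet_Ioo fun s hs ↦ ?_
  rw [abs_div, abs_neg, abs_of_pos hp, abs_of_pos (pow_pos (one_sub_mul_pos hp hs) 2)]

end Psi

/-- The Jacobian times the Euler integrand of `F(a,b;c;z)` at `t = ψ_p(s)`, written through the
positive quantities `u = s`, `v = 1 - s`, `D = 1 - (1 - p) s`, `q = 1 - z` and `r = 1 - w s`. -/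
lemma cpow_substitution_identity {p u v q r D : ℝ} (hp : 0 < p) (hu : 0 < u) (hv : 0 < v)
    (hq : 0 < q) (hr : 0 < r) (hD : 0 < D) (a b c : ℂ) :
    ((p / D ^ 2 : ℝ) : ℂ) * (((v / D : ℝ) : ℂ) ^ (b - 1) * ((p * u / D : ℝ) : ℂ) ^ (c - b - 1) *
      ((q * r / D : ℝ) : ℂ) ^ (-a)) =
    (p : ℂ) ^ (c - b) * (q : ℂ) ^ (-a) *
      ((u : ℂ) ^ (c - b - 1) * (v : ℂ) ^ (b - 1) * (D : ℂ) ^ (-(c - a)) * (r : ℂ) ^ (-a)) := by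
  rw [← cpow_one ((p / D ^ 2 : ℝ) : ℂ)]
  simp (disch := positivity) only [ofReal_cpow_eq_exp_log, Real.log_mul, Real.log_div,
    Real.log_pow, ← exp_add]
  congr 1
  push_cast
  ring

lemma gauss_integrand_comp_psi (a b c : ℂ) {p z s : ℝ} (hp : 0 < p) (hz : z < 1)
    (hs : s ∈ Ioo 0 1) :
    (p / (1 - (1 - p) * s) ^ 2) • ((psi p s : ℂ) ^ (b - 1) *
      ((1 - psi p s : ℝ) : ℂ) ^ (c - b - 1) * ((1 - z * psi p s : ℝ) : ℂ) ^ (-a)) =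
    (p : ℂ) ^ (c - b) * ((1 - z : ℝ) : ℂ) ^ (-a) *
      ((s : ℂ) ^ (c - b - 1) * ((1 - s : ℝ) : ℂ) ^ (b - 1) *
        ((1 - (1 - p) * s : ℝ) : ℂ) ^ (-(c - a)) *
        ((1 - (1 - p - z) / (1 - z) * s : ℝ) : ℂ) ^ (-a)) := by
  obtain ⟨hs0, hs1⟩ := hs
  have hD := one_sub_mul_pos hp ⟨hs0, hs1⟩
  have hq : 0 < 1 - z := by linarith
  have hr : 1 - (1 - p - z) / (1 - z) * s = ((1 - s) * (1 - z) + p * s) / (1 - z) := by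
    field_simp
    ring
  have hzpsi : 1 - z * psi p s = (1 - z) * (1 - (1 - p - z) / (1 - z) * s) /
      (1 - (1 - p) * s) := by
    rw [one_sub_mul_psi _ hD.ne', hr, mul_div_cancel₀ _ hq.ne']
  rw [real_smul, hzpsi, one_sub_psi hD.ne', psi]
  exact cpow_substitution_identity hp hs0 (by linarith) hq
    (hr ▸ div_pos (by nlinarith) hq) hD a b c

theorem Gauss_as_AppellF1_psi_p_general
    (a b c : ℂ)
    (p : ℝ) (hp : 0 < p) (z : ℝ) (hz : z < 1) :
    eulerF a b c z =
      ((p : ℝ) : ℂ) ^ (c - b) * ((1 - z : ℝ) : ℂ) ^ (-a) *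
      appellF1 (c - b) (c - a) a c (1 - p) ((1 - p - z) / (1 - z)) := by
  have hint := integral_zero_one_eq_integral_comp_psi hp
    fun t : ℝ ↦ (t : ℂ) ^ (b - 1) * ((1 - t : ℝ) : ℂ) ^ (c - b - 1) * ((1 - z * t : ℝ) : ℂ) ^ (-a)
  rw [intervalIntegral.integral_congr_Ioo_of_le (zero_le_one' ℝ)
    fun s hs ↦ gauss_integrand_comp_psi a b c hp hz hs, intervalIntegral.integral_const_mul] at hint
  rw [eulerF, appellF1, sub_sub_cancel, hint]
  ring

theorem Gauss_as_AppellF1_psi_p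
    (a b c : ℂ) (hb : 0 < b.re) (hbc : b.re < c.re)
    (p : ℝ) (hp : 0 < p) (z : ℝ) (hz : z < 1) :
    eulerF a b c z =
      ((p : ℝ) : ℂ) ^ (c - b) * ((1 - z : ℝ) : ℂ) ^ (-a) *
      appellF1 (c - b) (c - a) a c (1 - p) ((1 - p - z) / (1 - z)) :=
  Gauss_as_AppellF1_psi_p_general a b c p hp z hz

end
end
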